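/- arXiv:1801.04719 — 3 statements merged into one kernel-verified Lean document; each statement's English description precedes it below -/
import Mathlib

section
/- Let $p$ be prime, $t \geq 1$, $c \geq 0$, and let $\lambda(0)=0$, $\lambda(i+1)=\lambda(i)+\lfloor i/t\rfloor-\lfloor i/(pt)\rfloor$. For integers $k \geq 2$ and $n_k = (k-1)p^{c+1}t$, and any integer $i$ with $0 \leq i \leq t$, we have $\lambda(n_k) - \lambda(n_k - i) \leq (k-1)\varphi(p^{c+1}) \cdot i$, i.e., the slopes of $\lambda$ just below $n_k$ are at most $(k-1)\varphi(p^{c+1})$. -/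
/-! On the last block `[n_k - t, n_k)` below `n_k = m t`, `m = (k-1)p^{c+1}`, both floors are
constant: `⌊j/t⌋ = m - 1` and `⌊j/(pt)⌋ = m/p - 1`. So `λ` grows there by exactly
`m - m/p = (k-1)φ(p^{c+1})` per step, and the estimate holds with equality. -/

theorem Nat.mul_sub_one_div {p q : ℕ} (hp : 0 < p) (hq : 0 < q) : (p * q - 1) / p = q - 1 := by
  obtain ⟨q, rfl⟩ := Nat.exists_eq_add_of_lt hq
  refine Nat.div_eq_of_lt_le ?_ ?_ <;> simp only [mul_add, add_mul] <;> grind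

theorem div_sub_div_mul_eq_of_mem_Ico {p q t j : ℕ} (hp : 0 < p)
    (hj : j ∈ Set.Ico ((p * q - 1) * t) (p * q * t)) : j / t - j / (p * t) = p * q - q := by
  obtain ⟨hlo, hhi⟩ := hj
  have hq : 0 < q := Nat.pos_of_ne_zero fun h => by simp [h] at hhi
  have hpq : q ≤ p * q := Nat.le_mul_of_pos_left q hp
  have hjt : j / t = p * q - 1 := Nat.div_eq_of_lt_le hlo (by rwa [Nat.sub_add_cancel (by omega)])
  rw [mul_comm p t, ← Nat.div_div_eq_div_mul, hjt, Nat.mul_sub_one_div hp hq]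
  omega

theorem eq_add_nsmul_of_forall_succ_eq {M : Type*} [AddMonoid M] {f : ℕ → M} {a m : ℕ} {d : M}
    (h : ∀ j < m, f (a + j + 1) = f (a + j) + d) : f (a + m) = f a + m • d := by
  induction m with
  | zero => simp
  | succ m ih =>
    rw [← add_assoc, h m m.lt_succ_self, ih fun j hj => h j (by omega), succ_nsmul, add_assoc]

theorem stmt_3_general (p t c : ℕ) (hp : p.Prime)
    (lam : ℕ → ℕ)
    (hrec : ∀ i, lam (i + 1) = lam i + i / t - i / (p * t))
    (k : ℕ) (hk : 2 ≤ k) (i : ℕ) (hi : i ≤ t) :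
    (lam ((k - 1) * p ^ (c + 1) * t) : ℤ) - lam ((k - 1) * p ^ (c + 1) * t - i)
      ≤ (k - 1 : ℤ) * Nat.totient (p ^ (c + 1)) * i := by
  set q := (k - 1) * p ^ c
  have hpq : (k - 1) * p ^ (c + 1) = p * q := by ring
  have hq : 0 < q := Nat.mul_pos (by omega) (pow_pos hp.pos c)
  have hin : i ≤ p * q * t := hi.trans (Nat.le_mul_of_pos_left t (Nat.mul_pos hp.pos hq))
  have hstep : ∀ j < i, lam (p * q * t - i + j + 1) = lam (p * q * t - i + j) + (p * q - q) := by
    intro j hj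
    have hmem : p * q * t - i + j ∈ Set.Ico ((p * q - 1) * t) (p * q * t) := by
      constructor
      · rw [Nat.sub_one_mul]; omega
      · omega
    rw [hrec, Nat.add_sub_assoc (Nat.div_le_div_left (Nat.le_mul_of_pos_left t hp.pos) (by omega)),
      div_sub_div_mul_eq_of_mem_Ico hp.pos hmem]
  have htel := eq_add_nsmul_of_forall_succ_eq hstep
  rw [Nat.sub_add_cancel hin, smul_eq_mul] at htel
  have hφ : ((p * q - q : ℕ) : ℤ) = (k - 1 : ℤ) * Nat.totient (p ^ (c + 1)) := by
    rw [Nat.totient_prime_pow_succ hp, Nat.cast_sub (Nat.le_mul_of_pos_left q hp.pos)]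
    push_cast [q, Nat.cast_sub (by omega : 1 ≤ k), Nat.cast_sub hp.one_le]
    ring
  rw [hpq, htel, ← hφ]
  push_cast
  linarith

/-- Slope estimate just below `n_k = (k-1)p^{c+1}t` for the Newton polygon sequence `λ`:
for `0 ≤ i ≤ t`, `λ(n_k) - λ(n_k - i) ≤ (k-1) φ(p^{c+1}) i`. -/
theorem stmt_3 (p t c : ℕ) (hp : p.Prime) (ht : 1 ≤ t)
    (lam : ℕ → ℕ) (h0 : lam 0 = 0)
    (hrec : ∀ i, lam (i + 1) = lam i + i / t - i / (p * t))
    (k : ℕ) (hk : 2 ≤ k) (i : ℕ) (hi : i ≤ t) :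
    (lam ((k - 1) * p ^ (c + 1) * t) : ℤ) - lam ((k - 1) * p ^ (c + 1) * t - i)
      ≤ (k - 1 : ℤ) * Nat.totient (p ^ (c + 1)) * i :=
  stmt_3_general p t c hp lam hrec k hk i hi
end

section
/- Let $p$ be a prime and $n \geq 2$. In $\mathrm{GL}_2(\mathbb{Q}_p)$, let $I_{1,m}$ denote the subgroup of matrices $\begin{pmatrix} a & b \\ pc & d \end{pmatrix}$ with $a,b,c,d \in \mathbb{Z}_p$, $a,d \in \mathbb{Z}_p^\times$, and $b \equiv 0 \pmod{p^m}$. Then the double cosets $I_{1,n-1}\begin{pmatrix}1&0\\0&p\end{pmatrix}I_{1,n-1}$ and $I_{1,n-2}\begin{pmatrix}1&0\\0&p\end{pmatrix}I_{1,n-1}$ are equal as subsets of $\mathrm{GL}_2(\mathbb{Q}_p)$. -/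
open scoped Pointwise

/-- The Iwahori-type subgroup `I_{1,m}` of `GL₂(ℚ_p)`, viewed as the set of `2×2`
matrices `(a b; pc d)` with `a, d ∈ ℤ_p^×`, `c ∈ ℤ_p` and `b ≡ 0 mod p^m`,
described via the `p`-adic norms of the entries. -/
def Iset (p : ℕ) [Fact p.Prime] (m : ℕ) : Set (Matrix (Fin 2) (Fin 2) ℚ_[p]) :=
  {g | ‖g 0 0‖ = 1 ∧ ‖g 0 1‖ ≤ (p : ℝ) ^ (-(m : ℤ)) ∧ ‖g 1 0‖ ≤ (p : ℝ)⁻¹ ∧ ‖g 1 1‖ = 1}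

/-!
Write `g = (a b; c d) ∈ I_{1,m}`. Since `a` is a unit, `g` factors as the lower triangular
`L = (a 0; c d - cb/a)` times the unipotent `(1 b/a; 0 1)`, and moving that unipotent past
`diag(1,p)` multiplies its corner by `p`. So `g · diag(1,p) = L · diag(1,p) · (1 pb/a; 0 1)` with
both outer factors in `I_{1,m+1}`; as `I_{1,m+1}` is closed under multiplication this gives
`I_{1,m} diag(1,p) I_{1,m+1} ⊆ I_{1,m+1} diag(1,p) I_{1,m+1}`, and the other inclusion is
`I_{1,m+1} ⊆ I_{1,m}`.
-/

theorem Matrix.mul_diag_eq_lowerTriangular_mul_diag_mul_upperUnipotent {K : Type*} [Field K]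
    {a : K} (b c d t : K) (ha : a ≠ 0) :
    !![a, b; c, d] * !![1, 0; 0, t] = !![a, 0; c, d - c * (b / a)] * !![1, 0; 0, t]
      * !![1, t * (b / a); 0, 1] := by
  simp only [Matrix.mul_fin_two]
  ext i j
  fin_cases i <;> fin_cases j <;> simp <;> field_simp
  ring

lemma IsUltrametricDist.norm_add_eq_left_of_lt {E : Type*} [SeminormedAddGroup E]
    [IsUltrametricDist E] {x y : E} (h : ‖y‖ < ‖x‖) : ‖x + y‖ = ‖x‖ := by
  rw [norm_add_eq_max_of_norm_ne_norm h.ne', max_eq_left h.le]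

section Padic

variable {p : ℕ} [Fact p.Prime]

lemma natCast_zpow_neg_le_one (m : ℕ) : (p : ℝ) ^ (-(m : ℤ)) ≤ 1 :=
  zpow_le_one_of_nonpos₀ (by exact_mod_cast (Fact.out : p.Prime).one_le) (by omega)

lemma natCast_inv_lt_one : (p : ℝ)⁻¹ < 1 :=
  inv_lt_one_of_one_lt₀ (by exact_mod_cast (Fact.out : p.Prime).one_lt)

lemma norm_mul_lt_one_of_le {m : ℕ} {x y : ℚ_[p]} (hx : ‖x‖ ≤ (p : ℝ) ^ (-(m : ℤ)))
    (hy : ‖y‖ ≤ (p : ℝ)⁻¹) : ‖x * y‖ < 1 := by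
  rw [norm_mul]
  exact mul_lt_one_of_nonneg_of_lt_one_right (hx.trans (natCast_zpow_neg_le_one m))
    (norm_nonneg y) (hy.trans_lt natCast_inv_lt_one)

end Padic

section Iset

open IsUltrametricDist

variable {p : ℕ} [Fact p.Prime]

lemma Iset_antitone : Antitone (Iset p) := by
  intro m k hmk g ⟨h00, h01, h10, h11⟩
  refine ⟨h00, h01.trans ?_, h10, h11⟩
  exact zpow_le_zpow_right₀ (by exact_mod_cast (Fact.out : p.Prime).one_le) (by omega)

lemma Iset_mul_mem {m : ℕ} {g h : Matrix (Fin 2) (Fin 2) ℚ_[p]} (hg : g ∈ Iset p m)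
    (hh : h ∈ Iset p m) : g * h ∈ Iset p m := by
  obtain ⟨g00, g01, g10, g11⟩ := hg
  obtain ⟨h00, h01, h10, h11⟩ := hh
  have d00 : ‖g 0 0 * h 0 0‖ = 1 := by rw [norm_mul, g00, h00, one_mul]
  have d11 : ‖g 1 1 * h 1 1‖ = 1 := by rw [norm_mul, g11, h11, one_mul]
  simp only [Iset, Set.mem_ofPred_eq, Matrix.mul_apply, Fin.sum_univ_two]
  refine ⟨?_, ?_, ?_, ?_⟩
  · rw [norm_add_eq_left_of_lt (d00 ▸ norm_mul_lt_one_of_le g01 h10), d00]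
  · refine (Padic.nonarchimedean _ _).trans (max_le ?_ ?_)
    · rwa [norm_mul, g00, one_mul]
    · rwa [norm_mul, h11, mul_one]
  · refine (Padic.nonarchimedean _ _).trans (max_le ?_ ?_)
    · rwa [norm_mul, h00, mul_one]
    · rwa [norm_mul, g11, one_mul]
  · rw [add_comm, norm_add_eq_left_of_lt (d11 ▸ mul_comm (h 0 1) _ ▸ norm_mul_lt_one_of_le h01 g10),
      d11]

lemma Iset_mul_Iset_subset (m : ℕ) : Iset p m * Iset p m ⊆ Iset p m :=
  Set.mul_subset_iff.2 fun _ hg _ hh ↦ Iset_mul_mem hg hh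

lemma lowerTriangular_mem_Iset {m : ℕ} {a c d : ℚ_[p]} (ha : ‖a‖ = 1) (hc : ‖c‖ ≤ (p : ℝ)⁻¹)
    (hd : ‖d‖ = 1) : !![a, 0; c, d] ∈ Iset p m :=
  ⟨ha, by simp, hc, hd⟩

lemma upperUnipotent_mem_Iset {m : ℕ} {x : ℚ_[p]} (hx : ‖x‖ ≤ (p : ℝ) ^ (-(m : ℤ))) :
    !![1, x; 0, 1] ∈ Iset p m :=
  ⟨by simp, hx, by simp, by simp⟩

lemma mul_diag_mem_Iset_succ {m : ℕ} {g : Matrix (Fin 2) (Fin 2) ℚ_[p]} (hg : g ∈ Iset p m) :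
    g * !![1, 0; 0, (p : ℚ_[p])] ∈
      Iset p (m + 1) * {!![1, 0; 0, (p : ℚ_[p])]} * Iset p (m + 1) := by
  obtain ⟨g00, g01, g10, g11⟩ := hg
  have hcb : ‖g 1 0 * (g 0 1 / g 0 0)‖ < 1 := by
    rw [div_eq_mul_inv, ← mul_assoc, norm_mul, norm_inv, g00, inv_one, mul_one, mul_comm]
    exact norm_mul_lt_one_of_le g01 g10
  have hu : ‖(p : ℚ_[p]) * (g 0 1 / g 0 0)‖ ≤ (p : ℝ) ^ (-((m + 1 : ℕ) : ℤ)) := by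
    rw [norm_mul, norm_div, g00, div_one, Padic.norm_p, Nat.cast_succ, neg_add,
      zpow_add₀ (by simp [(Fact.out : p.Prime).ne_zero]), zpow_neg_one, mul_comm]
    gcongr
  rw [Matrix.eta_fin_two g, Matrix.mul_diag_eq_lowerTriangular_mul_diag_mul_upperUnipotent _ _ _ _
    (norm_ne_zero_iff.1 (g00.trans_ne one_ne_zero))]
  refine Set.mul_mem_mul (Set.mul_mem_mul ?_ rfl) (upperUnipotent_mem_Iset hu)
  refine lowerTriangular_mem_Iset g00 g10 ?_
  rw [sub_eq_add_neg, norm_add_eq_left_of_lt (by rwa [norm_neg, g11]), g11]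

lemma Iset_succ_mul_diag_mul_Iset_succ (m : ℕ) :
    Iset p (m + 1) * {!![1, 0; 0, (p : ℚ_[p])]} * Iset p (m + 1)
      = Iset p m * {!![1, 0; 0, (p : ℚ_[p])]} * Iset p (m + 1) := by
  refine (Set.mul_subset_mul_right (Set.mul_subset_mul_right (Iset_antitone m.le_succ))).antisymm ?_
  calc Iset p m * {!![1, 0; 0, (p : ℚ_[p])]} * Iset p (m + 1)
      ⊆ Iset p (m + 1) * {!![1, 0; 0, (p : ℚ_[p])]} * Iset p (m + 1) * Iset p (m + 1) :=
        Set.mul_subset_mul_right <| Set.mul_subset_iff.2 fun _ hg _ hD ↦ hD ▸ mul_diag_mem_Iset_succ hg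
    _ ⊆ Iset p (m + 1) * {!![1, 0; 0, (p : ℚ_[p])]} * Iset p (m + 1) := by
        rw [mul_assoc]
        exact Set.mul_subset_mul_left (Iset_mul_Iset_subset _)

end Iset

/-- For `n ≥ 2`, the double cosets `I_{1,n-1} diag(1,p) I_{1,n-1}` and
`I_{1,n-2} diag(1,p) I_{1,n-1}` coincide as subsets of `GL₂(ℚ_p)`. -/
theorem stmt_10 (p : ℕ) [Fact p.Prime] (n : ℕ) (hn : 2 ≤ n) :
    Iset p (n - 1) * ({!![1, 0; 0, (p : ℚ_[p])]} : Set (Matrix (Fin 2) (Fin 2) ℚ_[p]))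
        * Iset p (n - 1)
      = Iset p (n - 2) * ({!![1, 0; 0, (p : ℚ_[p])]} : Set (Matrix (Fin 2) (Fin 2) ℚ_[p]))
        * Iset p (n - 1) := by
  obtain ⟨m, rfl⟩ : ∃ m, n = m + 2 := ⟨n - 2, by omega⟩
  exact Iset_succ_mul_diag_mul_Iset_succ m
end

section
/- Let $V$ be a finite-dimensional vector space over a field $K$ equipped with an invertible endomorphism $U$, and let $\iota: V \hookrightarrow W$ be a $U$-equivariant injection of $K$-vector spaces with $U$ acting on $W$, such that $U(W) \subseteq \iota(V)$. Then for any $h$, $\iota$ restricts to an isomorphism between the subspaces of $V$ and of $W$ on which $U$ acts with all generalized eigenvalues of valuation $\leq h$ (slope-$\leq h$ subspaces), provided $U$ acts invertibly on the slope-$\leq h$ subspace of $W$. -/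
/-- Abstract finite-slope comparison: if `ι : V ↪ W` is a `U`-equivariant injection with
`U(W) ⊆ ι(V)`, `U` invertible on the finite-dimensional `V`, and `U` acts invertibly on the
slope-`≤ h` subspace of `W`, then `ι` identifies the slope-`≤ h` subspaces (sums of
generalized eigenspaces for eigenvalues of valuation `≤ h`) of `V` and `W`. -/
theorem stmt_12 {K : Type*} [Field K] (v : K → ℝ)
    {V W : Type*} [AddCommGroup V] [Module K V] [AddCommGroup W] [Module K W]
    [FiniteDimensional K V]
    (UV : V →ₗ[K] V) (hUV : Function.Bijective UV)
    (UW : W →ₗ[K] W)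
    (ι : V →ₗ[K] W) (hι : Function.Injective ι)
    (hequiv : ι.comp UV = UW.comp ι)
    (hfact : LinearMap.range UW ≤ LinearMap.range ι)
    (h : ℝ)
    (SV : Submodule K V) (SW : Submodule K W)
    (hSV : SV = ⨆ (α : K) (_ : α ≠ 0 ∧ v α ≤ h), Module.End.maxGenEigenspace UV α)
    (hSW : SW = ⨆ (α : K) (_ : α ≠ 0 ∧ v α ≤ h), Module.End.maxGenEigenspace UW α)
    (hinv : Submodule.map UW SW = SW ∧ ∀ x ∈ SW, UW x = 0 → x = 0) :
    Submodule.map ι SV = SW := by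
  -- equivariance of powers
  have key : ∀ (α : K) (n : ℕ) (y : V),
      ι (((UV - α • (1 : Module.End K V)) ^ n) y)
        = ((UW - α • (1 : Module.End K W)) ^ n) (ι y) := by
    intro α n
    induction n with
    | zero => simp
    | succ n ih =>
      intro y
      have h1 : ∀ z, ι (UV z) = UW (ι z) := fun z =>
        congrFun (congrArg DFunLike.coe hequiv) z
      rw [pow_succ', pow_succ']
      simp only [Module.End.mul_apply, LinearMap.sub_apply, LinearMap.smul_apply,
        Module.End.one_apply, map_sub, map_smul, h1, ih]
  rw [hSV, hSW, Submodule.map_iSup]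
  apply le_antisymm
  · refine iSup_le fun α => ?_
    rw [Submodule.map_iSup]
    refine iSup_le fun hα => le_iSup_of_le α <| le_iSup_of_le hα ?_
    rintro _ ⟨y, hy, rfl⟩
    rw [SetLike.mem_coe, Module.End.mem_maxGenEigenspace] at hy
    rw [Module.End.mem_maxGenEigenspace]
    obtain ⟨n, hn⟩ := hy
    exact ⟨n, by rw [← key, hn, map_zero]⟩
  · refine iSup_le fun α => iSup_le fun hα => ?_
    refine le_trans ?_ (le_iSup _ α)
    rw [Submodule.map_iSup]
    refine le_trans ?_ (le_iSup _ hα)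
    intro x hx
    rw [Module.End.mem_maxGenEigenspace] at hx
    obtain ⟨n, hn⟩ := hx
    -- show x ∈ range UW ≤ range ι
    have hx_range : x ∈ LinearMap.range ι := by
      apply hfact
      -- polynomial trick
      set p : Polynomial K := (Polynomial.X - Polynomial.C α) ^ n with hp
      have hc : p.coeff 0 = (-α) ^ n := by
        rw [hp, Polynomial.coeff_zero_eq_eval_zero]
        simp [sub_eq_neg_add]
      obtain ⟨q, hq⟩ := Polynomial.X_dvd_sub_C (p := p)
      have haeval : Polynomial.aeval UW p = (UW - α • (1 : Module.End K W)) ^ n := by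
        rw [hp, map_pow, map_sub, Polynomial.aeval_X, Polynomial.aeval_C,
          Algebra.algebraMap_eq_smul_one]
      have : Polynomial.aeval UW p x = 0 := by rw [haeval]; exact hn
      have hsplit : p = Polynomial.X * q + Polynomial.C ((-α) ^ n) := by
        rw [← hc, ← hq]; ring
      rw [hsplit, map_add, map_mul, Polynomial.aeval_X, Polynomial.aeval_C] at this
      have hαn : ((-α) ^ n : K) ≠ 0 := pow_ne_zero _ (neg_ne_zero.mpr hα.1)
      have : x = ((-α) ^ n)⁻¹ • UW (-(Polynomial.aeval UW q x)) := by
        have h0 : UW (Polynomial.aeval UW q x) + ((-α) ^ n) • x = 0 := by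
          simpa [Module.End.mul_apply, Algebra.algebraMap_eq_smul_one] using this
        have : ((-α) ^ n) • x = UW (-(Polynomial.aeval UW q x)) := by
          rw [map_neg, eq_neg_iff_add_eq_zero, add_comm]; exact h0
        rw [← this, smul_smul, inv_mul_cancel₀ hαn, one_smul]
      rw [this]
      exact Submodule.smul_mem _ _ (LinearMap.mem_range_self _ _)
    obtain ⟨y, rfl⟩ := hx_range
    refine ⟨y, ?_, rfl⟩
    rw [SetLike.mem_coe, Module.End.mem_maxGenEigenspace]
    refine ⟨n, hι ?_⟩
    rw [key, hn, map_zero]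
end
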